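/- Let a, b be real numbers and n ≥ 1 an integer. Define J_n(x) := ∫_{−∞}^{+∞} e^{−y²/2} H_n(ay + bx) dy. Then J_n is differentiable on ℝ and J_n'(x) = 2nb · J_{n−1}(x) for every x ∈ ℝ. -/

import Mathlib

/-- The Hermite polynomials `H_n(x) = (-1)^n e^{x²} (d/dx)^n e^{-x²}`. -/
noncomputable def hermiteH (n : ℕ) (x : ℝ) : ℝ :=
  (-1 : ℝ) ^ n * Real.exp (x ^ 2) * iteratedDeriv n (fun y => Real.exp (-y ^ 2)) x

/-- `J_n(x) = ∫ e^{-y²/2} H_n(ay + bx) dy`. -/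
noncomputable def J (a b : ℝ) (n : ℕ) (x : ℝ) : ℝ :=
  ∫ y : ℝ, Real.exp (-y ^ 2 / 2) * hermiteH n (a * y + b * x)

/-!
Differentiating `e^{-x²}` shows `H_n` is the polynomial given by `H_{n+1} = 2X H_n - H_n'`, and
induction gives `H_{n+1}' = 2(n+1) H_n`. It remains to differentiate `∫ g(y) P(ay + bx) dy` under
the integral sign for a polynomial `P` and a weight `g` with integrable polynomial moments: for
`|x' - x| < 1`, Taylor expansion at `ay + bx` bounds `|P'(ay + bx')|` by
`∑ᵢ |P'^{[i]}(ay + bx)| |b|^i` (Hasse derivatives `P'^{[i]}`), which gives a dominating function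
independent of `x'`.
-/

open Polynomial Real MeasureTheory Metric

/-- Physicists' Hermite polynomials; Mathlib's `Polynomial.hermite` are the probabilists' ones. -/
noncomputable def physHermite : ℕ → ℝ[X]
  | 0 => 1
  | n + 1 => 2 * X * physHermite n - derivative (physHermite n)

theorem derivative_physHermite_succ (n : ℕ) :
    derivative (physHermite (n + 1)) = 2 * (n + 1 : ℝ[X]) * physHermite n := by
  induction n with
  | zero => simp [physHermite]
  | succ m ih =>
    have hrec (k : ℕ) :
        physHermite (k + 1) = 2 * X * physHermite k - derivative (physHermite k) := rfl
    rw [hrec (m + 1), derivative_sub, derivative_mul, ih, hrec m]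
    simp only [derivative_mul, derivative_ofNat, derivative_X, derivative_natCast, derivative_add,
      derivative_one]
    push_cast
    ring

theorem iteratedDeriv_exp_neg_sq (n : ℕ) :
    iteratedDeriv n (fun y => exp (-y ^ 2)) =
      fun x => (-1) ^ n * (physHermite n).eval x * exp (-x ^ 2) := by
  induction n with
  | zero => funext x; simp [physHermite]
  | succ m ih =>
    funext x
    have hexp : HasDerivAt (fun x => exp (-x ^ 2)) (-(2 * x) * exp (-x ^ 2)) x := by
      simpa [mul_comm] using ((hasDerivAt_pow 2 x).fun_neg).exp
    rw [iteratedDeriv_succ, ih,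
      ((((physHermite m).hasDerivAt x).const_mul ((-1 : ℝ) ^ m)).fun_mul hexp).deriv]
    simp only [physHermite, eval_sub, eval_mul, eval_ofNat, eval_X, pow_succ]
    ring

theorem hermiteH_eq_eval_physHermite (n : ℕ) (x : ℝ) :
    hermiteH n x = (physHermite n).eval x := by
  have hexp : exp (x ^ 2) * exp (-x ^ 2) = 1 := by rw [← exp_add]; simp
  have hsign : ((-1 : ℝ) ^ n) * (-1) ^ n = 1 := by rw [← mul_pow]; norm_num
  rw [hermiteH, iteratedDeriv_exp_neg_sq]
  linear_combination (physHermite n).eval x * (exp (x ^ 2) * exp (-x ^ 2) * hsign + hexp)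

theorem integrable_exp_neg_mul_sq_mul_eval {c : ℝ} (hc : 0 < c) (Q : ℝ[X]) :
    Integrable fun y => exp (-c * y ^ 2) * Q.eval y := by
  induction Q using Polynomial.induction_on' with
  | add p q hp hq => simpa only [eval_add, mul_add] using hp.fun_add hq
  | monomial k r =>
    have hk := (integrable_rpow_mul_exp_neg_mul_sq hc
      (by linarith [Nat.cast_nonneg (α := ℝ) k] : (-1 : ℝ) < k)).const_mul r
    refine hk.congr (Filter.Eventually.of_forall fun y => ?_)
    simp only [rpow_natCast, eval_monomial]
    ring

theorem abs_eval_add_le (P : ℝ[X]) (r : ℝ) {s δ : ℝ} (hs : |s| ≤ δ) :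
    |P.eval (r + s)| ≤
      ∑ i ∈ Finset.range (P.natDegree + 1), |(hasseDeriv i P).eval r| * δ ^ i := by
  rw [add_comm, ← taylor_eval, eval_eq_sum_range, natDegree_taylor]
  refine (Finset.abs_sum_le_sum_abs _ _).trans (Finset.sum_le_sum fun i _ => ?_)
  rw [abs_mul, abs_pow, taylor_coeff]
  gcongr

section PolynomialMoments

variable {g : ℝ → ℝ} (hg : ∀ Q : ℝ[X], Integrable fun y => g y * Q.eval y)
include hg

theorem integrable_mul_eval_affine (P : ℝ[X]) (a t : ℝ) :
    Integrable fun y => g y * P.eval (a * y + t) := by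
  have h := hg (P.comp (C a * X + C t))
  simp only [eval_comp, eval_add, eval_mul, eval_C, eval_X] at h
  exact h

theorem hasDerivAt_integral_mul_eval_affine (a b : ℝ) (P : ℝ[X]) (x : ℝ) :
    HasDerivAt (fun x => ∫ y, g y * P.eval (a * y + b * x))
      (b * ∫ y, g y * (derivative P).eval (a * y + b * x)) x := by
  set P' := derivative P
  have h_bound : ∀ y, ∀ x' ∈ ball x 1, ‖b * (g y * P'.eval (a * y + b * x'))‖ ≤
      ∑ i ∈ Finset.range (P'.natDegree + 1),
        |b| ^ (i + 1) * |g y * (hasseDeriv i P').eval (a * y + b * x)| := by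
    intro y x' hx'
    have hs : |b * (x' - x)| ≤ |b| := by
      rw [abs_mul]
      exact mul_le_of_le_one_right (abs_nonneg b) (mem_ball_iff_norm.mp hx').le
    have hP' := abs_eval_add_le P' (a * y + b * x) hs
    rw [show a * y + b * x + b * (x' - x) = a * y + b * x' by ring] at hP'
    simp only [Real.norm_eq_abs, abs_mul, pow_succ] at hP' ⊢
    calc |b| * (|g y| * |P'.eval (a * y + b * x')|)
        ≤ |b| * (|g y| * ∑ i ∈ Finset.range (P'.natDegree + 1),
            |(hasseDeriv i P').eval (a * y + b * x)| * |b| ^ i) := by gcongr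
      _ = _ := by rw [Finset.mul_sum, Finset.mul_sum]; congr 1; ext; ring
  have h_diff : ∀ y, ∀ x' ∈ ball x 1, HasDerivAt (fun x => g y * P.eval (a * y + b * x))
      (b * (g y * P'.eval (a * y + b * x'))) x' := by
    intro y x' _
    have hlin : HasDerivAt (fun x => a * y + b * x) b x' := by
      simpa using ((hasDerivAt_id x').const_mul b).const_add (a * y)
    simpa [mul_comm, mul_assoc, mul_left_comm] using
      (((P.hasDerivAt _).comp x' hlin).const_mul (g y))
  have hderiv := hasDerivAt_integral_of_dominated_loc_of_deriv_le (ball_mem_nhds x one_pos)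
    (Filter.Eventually.of_forall fun x' => (integrable_mul_eval_affine hg P a (b * x')).1)
    (integrable_mul_eval_affine hg P a (b * x))
    ((integrable_mul_eval_affine hg P' a (b * x)).const_mul b).1
    (Filter.Eventually.of_forall h_bound)
    (integrable_finsetSum _ fun i _ =>
      ((integrable_mul_eval_affine hg _ a (b * x)).abs.const_mul _))
    (Filter.Eventually.of_forall h_diff)
  rw [← integral_const_mul]
  exact hderiv.2

end PolynomialMoments

/-- `J_n` is differentiable with `J_n'(x) = 2nb J_{n-1}(x)`. -/
theorem hasDerivAt_J (a b : ℝ) (n : ℕ) (hn : 1 ≤ n) (x : ℝ) :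
    HasDerivAt (J a b n) (2 * n * b * J a b (n - 1) x) x := by
  obtain ⟨m, rfl⟩ := Nat.exists_eq_add_of_le' hn
  have hJ (k : ℕ) :
      J a b k = fun x => ∫ y, exp (-y ^ 2 / 2) * (physHermite k).eval (a * y + b * x) := by
    funext x
    simp only [J, hermiteH_eq_eval_physHermite]
  have hgauss (Q : ℝ[X]) : Integrable fun y => exp (-y ^ 2 / 2) * Q.eval y := by
    simpa [neg_div, div_eq_inv_mul] using integrable_exp_neg_mul_sq_mul_eval (half_pos one_pos) Q
  rw [hJ, Nat.add_sub_cancel]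
  convert hasDerivAt_integral_mul_eval_affine hgauss a b (physHermite (m + 1)) x using 1
  simp only [hJ, derivative_physHermite_succ, eval_mul, eval_ofNat, eval_add, eval_natCast,
    eval_one, mul_assoc, mul_left_comm (exp _), integral_const_mul]
  push_cast
  ring
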